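/- Derivative of the constraint-manifold parametrization (chain-rule identity of Theorem 1's proof). Let f : E → ℝ and h : E → F₁ be continuously differentiable, let Φ : E → F₁ × F₂, Φ(x) = (h(x), q(x)), be a global C¹ diffeomorphism satisfying the orthonormality conditions, and suppose Dh(x)∘Dh(x)† is invertible for every x ∈ E. Define p(η) = Φ⁻¹(0, η). Then p is differentiable with Fréchet derivative Dp(η) = Dq(p(η))† for every η ∈ F₂, and consequently the gradient of f̃ = f ∘ p satisfies ∇f̃(η) = Dq(p(η))(∇f(p(η))). -/

import Mathlib

/-! Differentiating `Ψ ∘ (h, q) = id` shows that `DΨ` is a left inverse of `(Dh, Dq)`. The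
orthonormality conditions say that `(Dh, Dq)` maps `Dq†` onto the inclusion `η ↦ (0, η)`, so
`Dp = DΨ ∘ (0, ·) = DΨ ∘ (Dh, Dq) ∘ Dq† = Dq†`. The gradient formula is the chain rule read
through the Riesz isomorphism: `⟪∇f, Dq† v⟫ = ⟪Dq ∇f, v⟫`. -/

open ContinuousLinearMap InnerProductSpace

theorem HasFDerivAt.comp_eq_id_of_leftInverse {𝕜 E F : Type*} [NontriviallyNormedField 𝕜]
    [NormedAddCommGroup E] [NormedSpace 𝕜 E] [NormedAddCommGroup F] [NormedSpace 𝕜 F]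
    {Φ : E → F} {Ψ : F → E} {A : E →L[𝕜] F} {B : F →L[𝕜] E} {x : E}
    (hΨ : HasFDerivAt Ψ B (Φ x)) (hΦ : HasFDerivAt Φ A x) (hinv : Function.LeftInverse Ψ Φ) :
    B ∘L A = ContinuousLinearMap.id 𝕜 E :=
  (hΨ.comp x hΦ).unique <|
    (hasFDerivAt_id x).congr_of_eventuallyEq (Filter.Eventually.of_forall hinv)

section Hilbert

variable {𝕜 E F₁ F₂ : Type*} [RCLike 𝕜]
  [NormedAddCommGroup E] [InnerProductSpace 𝕜 E] [CompleteSpace E]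
  [NormedAddCommGroup F₂] [InnerProductSpace 𝕜 F₂] [CompleteSpace F₂]

theorem HasFDerivAt.hasGradientAt_comp_of_adjoint {f : E → 𝕜} {p : F₂ → E} {P : E →L[𝕜] F₂}
    {η : F₂} (hf : DifferentiableAt 𝕜 f (p η)) (hp : HasFDerivAt p (adjoint P) η) :
    HasGradientAt (f ∘ p) (P (gradient f (p η))) η := by
  have hdual :
      toDual 𝕜 E (gradient f (p η)) ∘L adjoint P = toDual 𝕜 F₂ (P (gradient f (p η))) := by
    ext v
    simp only [comp_apply, toDual_apply_apply, adjoint_inner_right]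
  rw [hasGradientAt_iff_hasFDerivAt, ← hdual]
  exact hf.hasGradientAt.hasFDerivAt.comp η hp

variable [NormedAddCommGroup F₁] [InnerProductSpace 𝕜 F₁] [CompleteSpace F₁]

theorem ContinuousLinearMap.prod_comp_adjoint_eq_inr {Dh : E →L[𝕜] F₁} {Dq : E →L[𝕜] F₂}
    (horth₁ : Dq ∘L adjoint Dq = ContinuousLinearMap.id 𝕜 F₂) (horth₂ : Dq ∘L adjoint Dh = 0) :
    Dh.prod Dq ∘L adjoint Dq = inr 𝕜 F₁ F₂ := by
  have hDh : Dh ∘L adjoint Dq = 0 := by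
    simpa only [adjoint_comp, adjoint_adjoint, map_zero] using congrArg adjoint horth₂
  ext v
  · exact congrArg (· v) hDh
  · exact congrArg (· v) horth₁

theorem hasFDerivAt_constraint_parametrization {h : E → F₁} {q : E → F₂} {Ψ : F₁ × F₂ → E} {η : F₂}
    (hh : DifferentiableAt 𝕜 h (Ψ (0, η))) (hq : DifferentiableAt 𝕜 q (Ψ (0, η)))
    (hΨ : DifferentiableAt 𝕜 Ψ (0, η))
    (hleft : Function.LeftInverse Ψ fun x => (h x, q x))
    (hright : (h (Ψ (0, η)), q (Ψ (0, η))) = (0, η))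
    (horth₁ : fderiv 𝕜 q (Ψ (0, η)) ∘L adjoint (fderiv 𝕜 q (Ψ (0, η)))
      = ContinuousLinearMap.id 𝕜 F₂)
    (horth₂ : fderiv 𝕜 q (Ψ (0, η)) ∘L adjoint (fderiv 𝕜 h (Ψ (0, η))) = 0) :
    HasFDerivAt (fun η' => Ψ (0, η')) (adjoint (fderiv 𝕜 q (Ψ (0, η)))) η := by
  set x := Ψ (0, η)
  set B := fderiv 𝕜 Ψ (0, η)
  have hBA : B ∘L (fderiv 𝕜 h x).prod (fderiv 𝕜 q x) = ContinuousLinearMap.id 𝕜 E :=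
    HasFDerivAt.comp_eq_id_of_leftInverse (hright ▸ hΨ.hasFDerivAt)
      (hh.hasFDerivAt.prodMk hq.hasFDerivAt) hleft
  have hBinr : B ∘L inr 𝕜 F₁ F₂ = adjoint (fderiv 𝕜 q x) := by
    rw [← prod_comp_adjoint_eq_inr horth₁ horth₂, ← comp_assoc, hBA, id_comp]
  exact hBinr ▸ hΨ.hasFDerivAt.comp η (inr 𝕜 F₁ F₂).hasFDerivAt

end Hilbert

theorem constraint_parametrization_derivative_general
    (n m : ℕ)
    (f : EuclideanSpace ℝ (Fin n) → ℝ)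
    (h : EuclideanSpace ℝ (Fin n) → EuclideanSpace ℝ (Fin m))
    (q : EuclideanSpace ℝ (Fin n) → EuclideanSpace ℝ (Fin (n - m)))
    (Ψ : EuclideanSpace ℝ (Fin m) × EuclideanSpace ℝ (Fin (n - m)) → EuclideanSpace ℝ (Fin n))
    (hf : ContDiff ℝ 1 f) (hh : ContDiff ℝ 1 h) (hq : ContDiff ℝ 1 q)
    (hΨ : ContDiff ℝ 1 Ψ)
    (hleft : ∀ x, Ψ (h x, q x) = x)
    (hright : ∀ p, (h (Ψ p), q (Ψ p)) = p)
    (horth₁ : ∀ x, (fderiv ℝ q x) ∘L (ContinuousLinearMap.adjoint (fderiv ℝ q x))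
      = ContinuousLinearMap.id ℝ (EuclideanSpace ℝ (Fin (n - m))))
    (horth₂ : ∀ x, (fderiv ℝ q x) ∘L (ContinuousLinearMap.adjoint (fderiv ℝ h x)) = 0) :
    ∀ η : EuclideanSpace ℝ (Fin (n - m)),
      HasFDerivAt (fun η' => Ψ (0, η'))
        (ContinuousLinearMap.adjoint (fderiv ℝ q (Ψ (0, η)))) η ∧
      gradient (fun η' => f (Ψ (0, η'))) η
        = (fderiv ℝ q (Ψ (0, η))) (gradient f (Ψ (0, η))) := by
  intro η
  have hp : HasFDerivAt (fun η' => Ψ (0, η')) (adjoint (fderiv ℝ q (Ψ (0, η)))) η :=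
    hasFDerivAt_constraint_parametrization (hh.differentiable one_ne_zero _)
      (hq.differentiable one_ne_zero _) (hΨ.differentiable one_ne_zero _) hleft (hright _)
      (horth₁ _) (horth₂ _)
  exact ⟨hp, (hp.hasGradientAt_comp_of_adjoint (hf.differentiable one_ne_zero _)).gradient⟩

/-- Derivative of the constraint-manifold parametrization.
With `Φ = (h, q)` a global C¹ diffeomorphism (inverse `Ψ`) satisfying the orthonormality
conditions and `Dh ∘ Dh†` invertible, the map `p η = Ψ (0, η)` is differentiable with
`Dp(η) = Dq(p η)†`, and the gradient of `f̃ = f ∘ p` is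
`∇f̃(η) = Dq(p η) (∇f (p η))`. -/
theorem constraint_parametrization_derivative
    (n m : ℕ) (hm : 1 ≤ m) (hmn : m < n)
    (f : EuclideanSpace ℝ (Fin n) → ℝ)
    (h : EuclideanSpace ℝ (Fin n) → EuclideanSpace ℝ (Fin m))
    (q : EuclideanSpace ℝ (Fin n) → EuclideanSpace ℝ (Fin (n - m)))
    (Ψ : EuclideanSpace ℝ (Fin m) × EuclideanSpace ℝ (Fin (n - m)) → EuclideanSpace ℝ (Fin n))
    (hf : ContDiff ℝ 1 f) (hh : ContDiff ℝ 1 h) (hq : ContDiff ℝ 1 q)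
    (hΨ : ContDiff ℝ 1 Ψ)
    (hleft : ∀ x, Ψ (h x, q x) = x)
    (hright : ∀ p, (h (Ψ p), q (Ψ p)) = p)
    (horth₁ : ∀ x, (fderiv ℝ q x) ∘L (ContinuousLinearMap.adjoint (fderiv ℝ q x))
      = ContinuousLinearMap.id ℝ (EuclideanSpace ℝ (Fin (n - m))))
    (horth₂ : ∀ x, (fderiv ℝ q x) ∘L (ContinuousLinearMap.adjoint (fderiv ℝ h x)) = 0)
    (hinv : ∀ x, IsUnit ((fderiv ℝ h x) ∘L (ContinuousLinearMap.adjoint (fderiv ℝ h x)))) :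
    ∀ η : EuclideanSpace ℝ (Fin (n - m)),
      HasFDerivAt (fun η' => Ψ (0, η'))
        (ContinuousLinearMap.adjoint (fderiv ℝ q (Ψ (0, η)))) η ∧
      gradient (fun η' => f (Ψ (0, η'))) η
        = (fderiv ℝ q (Ψ (0, η))) (gradient f (Ψ (0, η))) :=
  constraint_parametrization_derivative_general n m f h q Ψ hf hh hq hΨ hleft hright horth₁ horth₂
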